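/- arXiv:2411.00748 — 3 statements merged into one kernel-verified Lean document; each statement's English description precedes it below -/
import Mathlib

section
/- Let d ≥ 1, let μ ⊆ ℝ^d be a finite set and let x, y ∈ ℝ^d \ μ be distinct points. Assume that all pairwise distances between distinct points of μ ∪ {x, y} are distinct and that x lies in the convex hull of μ. Then R_1(x, μ ∪ {y}) ≤ R_1(x, μ), i.e. the maximal distance from x to one of its out-neighbours does not increase when the point y is added to the configuration. -/
open Metric

noncomputable section

namespace NNE

variable {d : ℕ}

/-- The points of `μ` different from `z` lying within distance `r` of `z`. -/
def cand (z : EuclideanSpace ℝ (Fin d)) (μ : Set (EuclideanSpace ℝ (Fin d))) (r : ℝ) :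
    Set (EuclideanSpace ℝ (Fin d)) :=
  {y | y ∈ μ ∧ y ≠ z ∧ dist z y ≤ r}

/-- The out-neighbour set `N(z, μ)`: the points of `μ \ {z}` within the minimal radius `r`
such that `z` lies in the convex hull of the points of `μ \ {z}` within distance `r`.
(For a finite `μ` with pairwise distinct distances this is exactly the set
`{y₁, …, y_k}` of the `k` nearest neighbours of `z`, for the minimal `k` such that `z`
lies in their convex hull.) -/
def N (z : EuclideanSpace ℝ (Fin d)) (μ : Set (EuclideanSpace ℝ (Fin d))) :
    Set (EuclideanSpace ℝ (Fin d)) :=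
  cand z μ (sInf {r | z ∈ convexHull ℝ (cand z μ r)})

/-- `R₁(x, μ)`: the maximal distance from `x` to one of its out-neighbours. -/
def R1 (x : EuclideanSpace ℝ (Fin d)) (μ : Set (EuclideanSpace ℝ (Fin d))) : ℝ :=
  sSup (dist x '' N x μ)

/-- `R₂(x, μ)`: the maximal distance `dist z y` over `z ∈ μ` with `x ∈ N(z, μ ∪ {x})`
and `y ∈ N(z, μ)`. -/
def R2 (x : EuclideanSpace ℝ (Fin d)) (μ : Set (EuclideanSpace ℝ (Fin d))) : ℝ :=
  sSup {r | ∃ z ∈ μ, ∃ y ∈ N z μ, x ∈ N z (insert x μ) ∧ r = dist z y}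

/-- The radius of stabilization `R(x, μ) = max {R₁(x,μ), 2 R₂(x,μ)}`. -/
def R (x : EuclideanSpace ℝ (Fin d)) (μ : Set (EuclideanSpace ℝ (Fin d))) : ℝ :=
  max (R1 x μ) (2 * R2 x μ)

/-- The NNE edge set: unordered pairs `{u, w}` of distinct points of `μ` with
`w ∈ N(u, μ)` or `u ∈ N(w, μ)`. -/
def edges (μ : Set (EuclideanSpace ℝ (Fin d))) : Set (Sym2 (EuclideanSpace ℝ (Fin d))) :=
  {e | ∃ u ∈ μ, ∃ w ∈ μ, u ≠ w ∧ (w ∈ N u μ ∨ u ∈ N w μ) ∧ e = s(u, w)}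

/-- All pairwise distances between distinct points of `S` are distinct. -/
def DistinctDistances (S : Set (EuclideanSpace ℝ (Fin d))) : Prop :=
  ∀ p ∈ S, ∀ q ∈ S, ∀ u ∈ S, ∀ v ∈ S,
    p ≠ q → u ≠ v → dist p q = dist u v → s(p, q) = s(u, v)

end NNE

open NNE

/-- Adding a point `y` to the configuration does not increase the maximal distance
from `x` to one of its out-neighbours: `R₁(x, μ ∪ {y}) ≤ R₁(x, μ)`. -/
theorem stmt1 {d : ℕ} (hd : 1 ≤ d) (μ : Finset (EuclideanSpace ℝ (Fin d)))
    (x y : EuclideanSpace ℝ (Fin d)) (hx : x ∉ μ) (hy : y ∉ μ) (hxy : x ≠ y)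
    (hdist : DistinctDistances
      (insert x (insert y (↑μ : Set (EuclideanSpace ℝ (Fin d))))))
    (hxconv : x ∈ convexHull ℝ (↑μ : Set (EuclideanSpace ℝ (Fin d)))) :
    R1 x (insert y (↑μ : Set (EuclideanSpace ℝ (Fin d)))) ≤
      R1 x (↑μ : Set (EuclideanSpace ℝ (Fin d))) := by
  classical
  set M : Set (EuclideanSpace ℝ (Fin d)) := ↑μ with hM
  set M' : Set (EuclideanSpace ℝ (Fin d)) := insert y ↑μ with hM'
  set S : Set ℝ := {r | x ∈ convexHull ℝ (cand x M r)} with hS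
  set S' : Set ℝ := {r | x ∈ convexHull ℝ (cand x M' r)} with hS'
  have hμne : μ.Nonempty := by
    rcases μ.eq_empty_or_nonempty with h | h
    · subst h; rw [hM] at hxconv; simp at hxconv
    · exact h
  -- S is nonempty
  have hSne : S.Nonempty := by
    refine ⟨μ.sup' hμne (dist x), ?_⟩
    have hcand : cand x M (μ.sup' hμne (dist x)) = M := by
      ext z
      constructor
      · rintro ⟨hz, -, -⟩; exact hz
      · intro hz
        exact ⟨hz, fun h => hx (h ▸ hz), Finset.le_sup' _ hz⟩
    simpa [hS, hcand] using hxconv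
  have hSnonneg : ∀ r ∈ S, (0:ℝ) ≤ r := by
    intro r hr
    by_contra h
    push_neg at h
    have : cand x M r = ∅ := by
      ext z
      simp only [cand, Set.mem_setOf_eq, Set.mem_empty_iff_false, iff_false]
      rintro ⟨-, -, hle⟩
      exact absurd (le_trans dist_nonneg hle) (not_le.mpr h)
    rw [hS] at hr
    simp only [Set.mem_setOf_eq, this, convexHull_empty] at hr
    exact hr
  have hSsub : S ⊆ S' := by
    intro r hr
    have : cand x M r ⊆ cand x M' r := by
      rintro z ⟨hz, hne, hle⟩
      exact ⟨Set.mem_insert_of_mem _ hz, hne, hle⟩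
    exact convexHull_mono this hr
  have hS'ne : S'.Nonempty := hSne.mono hSsub
  have hS'nonneg : ∀ r ∈ S', (0:ℝ) ≤ r := by
    intro r hr
    by_contra h
    push_neg at h
    have : cand x M' r = ∅ := by
      ext z
      simp only [cand, Set.mem_setOf_eq, Set.mem_empty_iff_false, iff_false]
      rintro ⟨-, -, hle⟩
      exact absurd (le_trans dist_nonneg hle) (not_le.mpr h)
    rw [hS'] at hr
    simp only [Set.mem_setOf_eq, this, convexHull_empty] at hr
    exact hr
  have hbddS : BddBelow S := ⟨0, fun r hr => hSnonneg r hr⟩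
  have hbddS' : BddBelow S' := ⟨0, fun r hr => hS'nonneg r hr⟩
  -- key: every r ∈ S dominates an attained element of S
  have key : ∀ r ∈ S, ∃ e ∈ S, e ≤ r ∧ ∃ z ∈ μ, dist x z = e := by
    intro r hr
    set F := μ.filter (fun z => dist x z ≤ r) with hF
    have hcand : cand x M r = ↑F := by
      ext z
      simp only [cand, Set.mem_setOf_eq, hF, Finset.coe_filter, hM, Finset.mem_coe]
      constructor
      · rintro ⟨hz, -, hle⟩; exact ⟨hz, hle⟩
      · rintro ⟨hz, hle⟩; exact ⟨hz, fun h => hx (h ▸ hz), hle⟩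
    have hFne : F.Nonempty := by
      rcases F.eq_empty_or_nonempty with h | h
      · rw [hS] at hr
        simp only [Set.mem_setOf_eq, hcand, h, Finset.coe_empty, convexHull_empty] at hr
        exact hr.elim
      · exact h
    obtain ⟨z, hzF, hz⟩ := F.exists_mem_eq_sup' hFne (dist x)
    have hzμ : z ∈ μ := (Finset.mem_filter.mp hzF).1
    have hzr : dist x z ≤ r := (Finset.mem_filter.mp hzF).2
    refine ⟨F.sup' hFne (dist x), ?_, ?_, z, hzμ, hz.symm⟩
    · have hcand2 : cand x M (F.sup' hFne (dist x)) = cand x M r := by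
        ext w
        simp only [cand, Set.mem_setOf_eq]
        constructor
        · rintro ⟨hw, hne, hle⟩
          exact ⟨hw, hne, le_trans hle (hz ▸ hzr)⟩
        · rintro ⟨hw, hne, hle⟩
          refine ⟨hw, hne, Finset.le_sup' _ ?_⟩
          exact Finset.mem_filter.mpr ⟨hw, hle⟩
      rw [hS] at hr ⊢
      simpa only [Set.mem_setOf_eq, hcand2] using hr
    · exact Finset.sup'_le _ _ fun w hw => (Finset.mem_filter.mp hw).2
  -- sInf S is attained with a witness in μ
  obtain ⟨r0, hr0⟩ := id hSne
  obtain ⟨e0, he0S, he0r, z0, hz0μ, hz0e⟩ := key r0 hr0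
  set SD : Finset ℝ := (μ.image (dist x)).filter (· ∈ S) with hSD
  have hSDne : SD.Nonempty := ⟨e0, Finset.mem_filter.mpr
    ⟨Finset.mem_image.mpr ⟨z0, hz0μ, hz0e⟩, he0S⟩⟩
  set m := SD.min' hSDne with hm
  have hmSD : m ∈ SD := SD.min'_mem hSDne
  have hmS : m ∈ S := (Finset.mem_filter.mp hmSD).2
  have hmW : ∃ z ∈ μ, dist x z = m := by
    simpa using Finset.mem_image.mp (Finset.mem_filter.mp hmSD).1
  have hmInf : sInf S = m := by
    apply le_antisymm (csInf_le hbddS hmS)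
    apply le_csInf hSne
    intro r hr
    obtain ⟨e, heS, her, z, hzμ, hze⟩ := key r hr
    have : e ∈ SD := Finset.mem_filter.mpr ⟨Finset.mem_image.mpr ⟨z, hzμ, hze⟩, heS⟩
    exact le_trans (SD.min'_le _ this) her
  obtain ⟨z, hzμ, hzm⟩ := hmW
  -- m ≤ R1 x M
  have hlow : m ≤ R1 x M := by
    have hzN : z ∈ N x M := by
      refine ⟨hzμ, fun h => hx (h ▸ hzμ), ?_⟩
      rw [hS] at hmInf  -- no-op
      show dist x z ≤ sInf {r | x ∈ convexHull ℝ (cand x M r)}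
      rw [show {r | x ∈ convexHull ℝ (cand x M r)} = S from rfl, hmInf, hzm]
    have hNsubM : N x M ⊆ M := fun w hw => hw.1
    have hfin : (dist x '' N x M).Finite := (μ.finite_toSet.subset hNsubM).image _
    have : dist x z ∈ dist x '' N x M := ⟨z, hzN, rfl⟩
    calc m = dist x z := hzm.symm
    _ ≤ sSup (dist x '' N x M) := le_csSup hfin.bddAbove this
  -- R1 x M' ≤ sInf S'
  have hup : R1 x M' ≤ sInf S' := by
    apply Real.sSup_le
    · rintro b ⟨w, hw, rfl⟩
      exact hw.2.2
    · exact le_csInf hS'ne hS'nonneg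
  have hinfle : sInf S' ≤ sInf S := csInf_le_csInf hbddS' hSne hSsub
  calc R1 x M' ≤ sInf S' := hup
  _ ≤ sInf S := hinfle
  _ = m := hmInf
  _ ≤ R1 x M := hlow
end
end

section
/- Let d ≥ 1, let μ ⊆ ℝ^d be a finite set, let z ∈ μ and let x, y ∈ ℝ^d \ μ be distinct points. Assume that all pairwise distances between distinct points of μ ∪ {x, y} are distinct and that z lies in the convex hull of the other points of μ. If x ∈ N(z, μ ∪ {x, y}), then x ∈ N(z, μ ∪ {x}); that is, adding a further point y can only remove x from the set of out-neighbours of z. -/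
open Metric

noncomputable section

open NNE

/-- Adding a further point `y` can only remove `x` from the set of out-neighbours of `z`:
if `x ∈ N(z, μ ∪ {x, y})` then `x ∈ N(z, μ ∪ {x})`. -/
theorem stmt2 {d : ℕ} (hd : 1 ≤ d) (μ : Finset (EuclideanSpace ℝ (Fin d)))
    (z : EuclideanSpace ℝ (Fin d)) (hz : z ∈ μ)
    (x y : EuclideanSpace ℝ (Fin d)) (hx : x ∉ μ) (hy : y ∉ μ) (hxy : x ≠ y)
    (hdist : DistinctDistances
      (insert x (insert y (↑μ : Set (EuclideanSpace ℝ (Fin d))))))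
    (hzconv : z ∈ convexHull ℝ ((↑μ : Set (EuclideanSpace ℝ (Fin d))) \ {z}))
    (hmem : x ∈ N z (insert x (insert y (↑μ : Set (EuclideanSpace ℝ (Fin d)))))) :
    x ∈ N z (insert x (↑μ : Set (EuclideanSpace ℝ (Fin d)))) := by
  classical
  obtain ⟨hxS, hxz, hdx⟩ := hmem
  refine ⟨Set.mem_insert _ _, hxz, le_trans hdx ?_⟩
  apply csInf_le_csInf
  · -- bounded below by 0
    refine ⟨0, fun r hr => ?_⟩
    by_contra hlt
    push_neg at hlt
    have hempty : cand z (insert x (insert y (↑μ : Set (EuclideanSpace ℝ (Fin d))))) r = ∅ := by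
      ext p
      simp only [cand, Set.mem_setOf_eq, Set.mem_empty_iff_false, iff_false]
      rintro ⟨-, -, hp⟩
      exact absurd (le_trans dist_nonneg hp) (not_le.mpr hlt)
    rw [Set.mem_setOf_eq, hempty, convexHull_empty] at hr
    exact hr
  · -- nonempty
    have hμne : μ.Nonempty := ⟨z, hz⟩
    refine ⟨μ.sup' hμne (dist z), ?_⟩
    have hsub : (↑μ : Set (EuclideanSpace ℝ (Fin d))) \ {z} ⊆
        cand z (insert x (↑μ : Set (EuclideanSpace ℝ (Fin d)))) (μ.sup' hμne (dist z)) := by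
      rintro p ⟨hp, hpz⟩
      exact ⟨Set.mem_insert_of_mem _ hp, hpz, Finset.le_sup' _ hp⟩
    exact convexHull_mono hsub hzconv
  · -- subset of radii sets
    intro r hr
    have hsub : cand z (insert x (↑μ : Set (EuclideanSpace ℝ (Fin d)))) r ⊆
        cand z (insert x (insert y (↑μ : Set (EuclideanSpace ℝ (Fin d))))) r := by
      rintro p ⟨hp, hpz, hpd⟩
      refine ⟨?_, hpz, hpd⟩
      rcases hp with hp | hp
      · exact Or.inl hp
      · exact Or.inr (Or.inr hp)
    exact convexHull_mono hsub hr
end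
end

section
/- Let d ≥ 1 and m ∈ ℕ. Then for every x ∈ ℝ^d there exist K ∈ ℕ and points y_1, …, y_K ∈ ℝ^d with 2/3 + 2/9 < ‖y_i − x‖ < 1 for all i, such that for every y ∈ ℝ^d with ‖y − x‖ > 2/3, at least m of the points y_1, …, y_K satisfy ‖y_i − y‖ < ‖x − y‖; that is, every point y outside the ball B(x, 2/3) has at least m of the points y_1, …, y_K strictly closer to it than x. -/
/-- Around every `x ∈ ℝ^d` one can place points `y₁, …, y_K` in the ring
`2/3 + 2/9 < ‖y - x‖ < 1` such that every point `y` with `‖y - x‖ > 2/3` has at least `m`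
of the points `y₁, …, y_K` strictly closer to it than `x`. -/
theorem stmt17 (d : ℕ) (hd : 1 ≤ d) (m : ℕ) (x : EuclideanSpace ℝ (Fin d)) :
    ∃ (K : ℕ) (y : Fin K → EuclideanSpace ℝ (Fin d)),
      (∀ i, 2/3 + 2/9 < ‖y i - x‖ ∧ ‖y i - x‖ < 1) ∧
      ∀ p : EuclideanSpace ℝ (Fin d), 2/3 < ‖p - x‖ →
        m ≤ {i : Fin K | ‖y i - p‖ < ‖x - p‖}.ncard := by
  -- a finite (1/4)-net of the unit sphere
  obtain ⟨s, hss, hsfin, hcov⟩ :=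
    Metric.finite_approx_of_totallyBounded
      (isCompact_sphere (0 : EuclideanSpace ℝ (Fin d)) 1).totallyBounded (1/4) (by norm_num)
  haveI := hsfin.fintype
  set ι := s × Fin m with hι
  haveI : Fintype ι := instFintypeProd _ _
  set K := Fintype.card ι with hK
  set e : ι ≃ Fin K := Fintype.equivFin ι with he
  set r : ℝ := 17/18 with hr
  refine ⟨K, fun i => x + r • ((e.symm i).1 : EuclideanSpace ℝ (Fin d)), ?_, ?_⟩
  · intro i
    have hu : ‖((e.symm i).1 : EuclideanSpace ℝ (Fin d))‖ = 1 := by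
      have := hss (e.symm i).1.2
      simpa [mem_sphere_iff_norm] using this
    have hnr : ‖x + r • ((e.symm i).1 : EuclideanSpace ℝ (Fin d)) - x‖ = r := by
      rw [add_sub_cancel_left, norm_smul, hu, mul_one, Real.norm_eq_abs,
        abs_of_pos (by norm_num [hr] : (0:ℝ) < r)]
    rw [hnr]
    constructor <;> norm_num [hr]
  · intro p hp
    have ht0 : (0:ℝ) < ‖p - x‖ := lt_trans (by norm_num) hp
    set t : ℝ := ‖p - x‖ with htdef
    set v : EuclideanSpace ℝ (Fin d) := t⁻¹ • (p - x) with hv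
    have hvnorm : ‖v‖ = 1 := by
      rw [hv, norm_smul, norm_inv, Real.norm_eq_abs, abs_of_pos ht0, ← htdef,
        inv_mul_cancel₀ ht0.ne']
    have hvs : v ∈ Metric.sphere (0 : EuclideanSpace ℝ (Fin d)) 1 := by
      simpa [mem_sphere_iff_norm] using hvnorm
    obtain ⟨u, hus, hdvu⟩ : ∃ u ∈ s, dist v u < 1/4 := by
      have := hcov hvs
      simpa using this
    -- every index (u, j) is strictly closer to p than x
    have hclose : ∀ j : Fin m,
        e (⟨u, hus⟩, j) ∈ {i : Fin K | ‖x + r • ((e.symm i).1 : EuclideanSpace ℝ (Fin d)) - p‖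
          < ‖x - p‖} := by
      intro j
      have hunorm : ‖u‖ = 1 := by simpa [mem_sphere_iff_norm] using hss hus
      have huv : (31:ℝ)/32 < inner ℝ u v := by
        have h1 : ‖u - v‖ < 1/4 := by
          rw [← dist_eq_norm, dist_comm]; exact hdvu
        have h2 : ‖u - v‖^2 < (1/4)^2 := by
          apply sq_lt_sq' _ h1
          nlinarith [norm_nonneg (u - v)]
        have h3 : ‖u - v‖^2 = 2 - 2 * inner ℝ u v := by
          rw [@norm_sub_sq_real]
          rw [hunorm, hvnorm]; ring
        nlinarith
      have key : ‖r • u - (p - x)‖ < ‖p - x‖ := by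
        have hpx : p - x = t • v := by
          rw [hv, smul_smul, mul_inv_cancel₀ ht0.ne', one_smul]
        have hsq : ‖r • u - (p - x)‖^2 < ‖p - x‖^2 := by
          rw [hpx, @norm_sub_sq_real, norm_smul, norm_smul, inner_smul_left,
            inner_smul_right]
          rw [hunorm, hvnorm, Real.norm_eq_abs, Real.norm_eq_abs]
          have hra : |r| = r := abs_of_pos (by norm_num [hr])
          have hta : |t| = t := abs_of_pos ht0
          rw [hra, hta]
          simp only [starRingEnd_apply, star_trivial, hr]
          have h23 : (2:ℝ)/3 < t := hp
          nlinarith [huv, h23, mul_pos (sub_pos.mpr h23) (sub_pos.mpr huv)]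
        exact lt_of_pow_lt_pow_left₀ 2 (norm_nonneg _) hsq
      simp only [Set.mem_setOf_eq, Equiv.symm_apply_apply]
      have h1 : x + r • u - p = r • u - (p - x) := by abel
      have h2 : x - p = -(p - x) := by abel
      rw [h1, h2, norm_neg]
      exact key
    -- count: the m indices e (u, j) are distinct
    have hinj : Function.Injective (fun j : Fin m => e (⟨u, hus⟩, j)) := by
      intro a b hab
      exact congrArg Prod.snd (e.injective hab)
    calc m = (Set.range (fun j : Fin m => e (⟨u, hus⟩, j))).ncard := by
            rw [← Set.image_univ, Set.ncard_image_of_injective _ hinj]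
            simp [Set.ncard_univ]
      _ ≤ _ := by
            apply Set.ncard_le_ncard
            · rintro i ⟨j, rfl⟩
              exact hclose j
            · exact Set.toFinite _
end
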